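/- arXiv:math/0603406 — 4 statements merged into one kernel-verified Lean document; each statement's English description precedes it below -/
import Mathlib

section
/- Let n ≥ 1, let a ∈ ℂ, and let f and g be symmetric polynomials in the n variables x₁,…,xₙ over ℂ, each of total degree strictly less than n. If the polynomials in n−1 variables obtained by substituting a for the last variable agree, i.e. f(x₁,…,x_{n−1},a) = g(x₁,…,x_{n−1},a), then f = g. -/
/-! `f - g` is symmetric and vanishes on the hyperplane `xₙ = a`, hence on every hyperplane
`xᵢ = a`. A nonzero polynomial of total degree `< n` cannot vanish on the union of the `n`
hyperplanes `xᵢ = aᵢ`: its leading monomial misses some variable `xⱼ`, and the Combinatorial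
Nullstellensatz on a grid whose `j`-th factor is `{aⱼ}` gives a point with `xⱼ = aⱼ` where it does
not vanish. -/

open MvPolynomial

lemma Finsupp.exists_eq_zero_of_degree_lt_card {σ : Type*} [Fintype σ] (t : σ →₀ ℕ)
    (ht : t.degree < Fintype.card σ) : ∃ i, t i = 0 := by
  by_contra! hpos
  have : Fintype.card σ ≤ t.degree := by
    rw [Finsupp.degree_eq_sum, Fintype.card_eq_sum_ones]
    exact Finset.sum_le_sum fun i _ ↦ Nat.one_le_iff_ne_zero.mpr (hpos i)
  omega

namespace MvPolynomial

variable {σ R : Type*} [CommRing R]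

theorem eq_zero_of_eval_eq_zero_of_exists_apply_eq [Fintype σ] [IsDomain R] [Infinite R]
    (p : MvPolynomial σ R) (a : σ → R) (hdeg : p.totalDegree < Fintype.card σ)
    (hp : ∀ x : σ → R, (∃ i, x i = a i) → eval x p = 0) : p = 0 := by
  classical
  let _ : LinearOrder σ := WellOrderingRel.isWellOrder.linearOrder
  by_contra hp0
  set t := (MonomialOrder.degLex (σ := σ)).degree p
  have ht : t.degree = p.totalDegree := degree_degLexDegree
  obtain ⟨j, hj⟩ := t.exists_eq_zero_of_degree_lt_card (ht ▸ hdeg)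
  choose S hS using fun i ↦ Infinite.exists_subset_card_eq R (t i + 1)
  obtain ⟨x, hxS, hx⟩ := combinatorial_nullstellensatz_exists_eval_nonzero p t
    (MonomialOrder.coeff_degree_ne_zero_iff.mpr hp0) ht.symm
    (Function.update S j {a j}) fun i ↦ by
      rcases eq_or_ne i j with rfl | hij
      · simp [hj]
      · simp [hij, hS]
  exact hx (hp x ⟨j, by simpa using hxS j⟩)

theorem IsSymmetric.eval_eq_zero_of_exists_apply_eq {p : MvPolynomial σ R} (hp : p.IsSymmetric)
    (i₀ : σ) (a : R) (h : ∀ x : σ → R, x i₀ = a → eval x p = 0)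
    (x : σ → R) (hx : ∃ i, x i = a) : eval x p = 0 := by
  classical
  obtain ⟨i, hi⟩ := hx
  rw [← hp (Equiv.swap i i₀), eval_rename]
  exact h _ (by simp [hi])

theorem eval_aeval {τ : Type*} (G : σ → MvPolynomial τ R) (y : τ → R) (p : MvPolynomial σ R) :
    eval y (aeval G p) = eval (fun i ↦ eval y (G i)) p := by
  rw [aeval_eq_bind₁]
  exact eval₂Hom_bind₁ _ _ _ _

theorem eval_dite_X_C {n : ℕ} (a : R) (x : Fin n → R) (hx : ∀ i : Fin n, n - 1 ≤ i → x i = a)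
    (i : Fin n) :
    eval (fun k : Fin (n - 1) ↦ x (Fin.castLE (n.sub_le 1) k))
      (if h : (i : ℕ) < n - 1 then X ⟨i, h⟩ else C a) = x i := by
  split_ifs with h
  · simp [Fin.castLE]
  · simpa using (hx i (not_lt.mp h)).symm

end MvPolynomial

theorem symm_poly_determined_by_evaluation_general
    (n : ℕ) (a : ℂ)
    (f g : MvPolynomial (Fin n) ℂ)
    (hf_sym : ∀ σ : Equiv.Perm (Fin n), rename σ f = f)
    (hg_sym : ∀ σ : Equiv.Perm (Fin n), rename σ g = g)
    (hf_deg : f.totalDegree < n) (hg_deg : g.totalDegree < n)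
    (h : aeval (fun i : Fin n => if h : (i : ℕ) < n - 1
          then (X ⟨(i : ℕ), h⟩ : MvPolynomial (Fin (n - 1)) ℂ) else C a) f
        = aeval (fun i : Fin n => if h : (i : ℕ) < n - 1
          then (X ⟨(i : ℕ), h⟩ : MvPolynomial (Fin (n - 1)) ℂ) else C a) g) :
    f = g := by
  have hn : 0 < n := Nat.zero_lt_of_lt hf_deg
  let last : Fin n := ⟨n - 1, Nat.sub_one_lt_of_lt hn⟩
  have h_last : ∀ x : Fin n → ℂ, x last = a → eval x (f - g) = 0 := by
    intro x hx
    have hx' : ∀ i : Fin n, n - 1 ≤ i → x i = a := fun i hi ↦ by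
      rwa [show i = last from Fin.ext (by simp only [last]; omega)]
    have := congrArg (eval fun k : Fin (n - 1) ↦ x (Fin.castLE (n.sub_le 1) k)) h
    simp only [eval_aeval, eval_dite_X_C a x hx'] at this
    rw [map_sub, this, sub_self]
  have h_deg : (f - g).totalDegree < Fintype.card (Fin n) :=
    (totalDegree_sub f g).trans_lt (by simpa using max_lt hf_deg hg_deg)
  refine sub_eq_zero.mp (eq_zero_of_eval_eq_zero_of_exists_apply_eq _ (fun _ ↦ a) h_deg ?_)
  exact fun x ↦ (IsSymmetric.sub hf_sym hg_sym).eval_eq_zero_of_exists_apply_eq last a h_last x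

/-- A symmetric polynomial in `n ≥ 1` variables over `ℂ` of total degree `< n` is
determined by substituting `a ∈ ℂ` for the last variable. -/
theorem symm_poly_determined_by_evaluation
    (n : ℕ) (hn : 1 ≤ n) (a : ℂ)
    (f g : MvPolynomial (Fin n) ℂ)
    (hf_sym : ∀ σ : Equiv.Perm (Fin n), rename σ f = f)
    (hg_sym : ∀ σ : Equiv.Perm (Fin n), rename σ g = g)
    (hf_deg : f.totalDegree < n) (hg_deg : g.totalDegree < n)
    (h : aeval (fun i : Fin n => if h : (i : ℕ) < n - 1
          then (X ⟨(i : ℕ), h⟩ : MvPolynomial (Fin (n - 1)) ℂ) else C a) f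
        = aeval (fun i : Fin n => if h : (i : ℕ) < n - 1
          then (X ⟨(i : ℕ), h⟩ : MvPolynomial (Fin (n - 1)) ℂ) else C a) g) :
    f = g :=
  symm_poly_determined_by_evaluation_general n a f g hf_sym hg_sym hf_deg hg_deg h
end

section
/- Let n ≥ 1, let a ∈ ℂ, and let f be a symmetric polynomial in the n variables x₁,…,xₙ over ℂ of total degree strictly less than n. If substituting a for the last variable yields the zero polynomial, i.e. f(x₁,…,x_{n−1},a) = 0, then f = 0. -/
open MvPolynomial

/-- Substituting `X i + C a` for the variables does not increase total degree. -/
private lemma td_shift_le {k : ℕ} (a : ℂ) (g : MvPolynomial (Fin k) ℂ) :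
    (aeval (fun i : Fin k => X i + C a) g).totalDegree ≤ g.totalDegree := by
  conv_lhs => rw [g.as_sum, map_sum]
  apply totalDegree_finsetSum_le
  intro d hd
  rw [aeval_monomial]
  refine (totalDegree_mul _ _).trans ?_
  have h1 : (algebraMap ℂ (MvPolynomial (Fin k) ℂ) (coeff d g)).totalDegree = 0 := by
    rw [algebraMap_eq, totalDegree_C]
  rw [h1, zero_add]
  refine (totalDegree_finset_prod _ _).trans ?_
  refine le_trans ?_ (le_totalDegree hd)
  rw [Finsupp.sum]
  apply Finset.sum_le_sum
  intro i _
  refine (totalDegree_pow _ _).trans ?_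
  have : ((X i + C a : MvPolynomial (Fin k) ℂ)).totalDegree ≤ 1 := by
    refine (totalDegree_add _ _).trans ?_
    simp [totalDegree_X, totalDegree_C]
  calc d i * (X i + C a : MvPolynomial (Fin k) ℂ).totalDegree ≤ d i * 1 :=
        Nat.mul_le_mul_left _ this
    _ = d i := Nat.mul_one _

/-- A symmetric polynomial in `n ≥ 1` variables over `ℂ` of total degree `< n` which
vanishes upon substituting `a ∈ ℂ` for the last variable is identically zero. -/
theorem symm_poly_zero_of_evaluation_zero
    (n : ℕ) (hn : 1 ≤ n) (a : ℂ)
    (f : MvPolynomial (Fin n) ℂ)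
    (hf_sym : ∀ σ : Equiv.Perm (Fin n), rename σ f = f)
    (hf_deg : f.totalDegree < n)
    (h : aeval (fun i : Fin n => if h : (i : ℕ) < n - 1
          then (X ⟨(i : ℕ), h⟩ : MvPolynomial (Fin (n - 1)) ℂ) else C a) f = 0) :
    f = 0 := by
  obtain ⟨m, rfl⟩ : ∃ m, n = m + 1 := ⟨n - 1, (Nat.succ_pred_eq_of_pos hn).symm⟩
  -- Step A: the hypothesis in terms of substituting `a` for the *first* variable.
  set ψ : Fin (m + 1) → MvPolynomial (Fin m) ℂ := Fin.cases (C a) (fun k => X k) with hψ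
  have h0 : aeval ψ f = 0 := by
    have hcomp : ψ ∘ (finRotate (m + 1)) = fun i : Fin (m + 1) =>
        if h : (i : ℕ) < (m + 1) - 1 then (X ⟨(i : ℕ), h⟩ : MvPolynomial (Fin m) ℂ)
        else C a := by
      funext j
      refine Fin.lastCases ?_ ?_ j
      · simp [hψ, Function.comp, finRotate_last]
      · intro k
        have hk : (Fin.castSucc k : ℕ) < (m + 1) - 1 := k.isLt
        have : finRotate (m + 1) (Fin.castSucc k) = Fin.succ k := by
          rw [finRotate_succ_apply, Fin.coeSucc_eq_succ]
        simp [hψ, Function.comp, this, hk]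
    calc aeval ψ f = aeval ψ (rename (finRotate (m + 1)) f) := by
          rw [hf_sym (finRotate (m + 1))]
      _ = aeval (ψ ∘ (finRotate (m + 1))) f := aeval_rename _ _ _
      _ = 0 := by rw [hcomp]; exact h
  -- Step B: `(X 0 - C a) ∣ f` via `finSuccEquiv`.
  have hevalhom : ∀ g : MvPolynomial (Fin (m + 1)) ℂ,
      Polynomial.eval (C a : MvPolynomial (Fin m) ℂ) (finSuccEquiv ℂ m g) = aeval ψ g := by
    intro g
    have hhom : (Polynomial.evalRingHom (C a : MvPolynomial (Fin m) ℂ)).comp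
        (finSuccEquiv ℂ m : MvPolynomial (Fin (m + 1)) ℂ →+* _) =
        ((aeval ψ : MvPolynomial (Fin (m + 1)) ℂ →ₐ[ℂ] MvPolynomial (Fin m) ℂ) :
          MvPolynomial (Fin (m + 1)) ℂ →+* MvPolynomial (Fin m) ℂ) := by
      apply MvPolynomial.ringHom_ext
      · intro r
        simp [finSuccEquiv_apply, algebraMap_eq]
      · intro i
        refine Fin.cases ?_ ?_ i
        · simp [hψ, finSuccEquiv_X_zero]
        · intro k
          simp [hψ, finSuccEquiv_X_succ]
    exact RingHom.congr_fun hhom g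
  have hroot : (Polynomial.X - Polynomial.C (C a : MvPolynomial (Fin m) ℂ)) ∣
      finSuccEquiv ℂ m f := by
    rw [Polynomial.dvd_iff_isRoot, Polynomial.IsRoot, hevalhom, h0]
  have hX0 : (X 0 - C a : MvPolynomial (Fin (m + 1)) ℂ) ∣ f := by
    have hdvd := map_dvd (finSuccEquiv ℂ m).symm hroot
    rw [AlgEquiv.symm_apply_apply] at hdvd
    have heq : (finSuccEquiv ℂ m).symm
        (Polynomial.X - Polynomial.C (C a : MvPolynomial (Fin m) ℂ)) =
        (X 0 - C a : MvPolynomial (Fin (m + 1)) ℂ) := by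
      apply (finSuccEquiv ℂ m).injective
      rw [AlgEquiv.apply_symm_apply, map_sub, finSuccEquiv_X_zero]
      congr 1
      simp [finSuccEquiv_apply]
    rwa [heq] at hdvd
  -- Step C: `(X i - C a) ∣ f` for every `i`, by symmetry.
  have hXi : ∀ i : Fin (m + 1), (X i - C a : MvPolynomial (Fin (m + 1)) ℂ) ∣ f := by
    intro i
    have hdvd := map_dvd (rename (⇑(Equiv.swap (0 : Fin (m + 1)) i))) hX0
    rwa [hf_sym (Equiv.swap 0 i), map_sub, rename_X, rename_C,
      Equiv.swap_apply_left] at hdvd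
  -- Step D: shift variables by `a`; then every `X i` divides the image.
  set τ : MvPolynomial (Fin (m + 1)) ℂ →ₐ[ℂ] MvPolynomial (Fin (m + 1)) ℂ :=
    aeval (fun i => X i + C a) with hτ
  have hXdvd : ∀ i : Fin (m + 1), (X i : MvPolynomial (Fin (m + 1)) ℂ) ∣ τ f := by
    intro i
    have hdvd := map_dvd τ (hXi i)
    have : τ (X i - C a) = X i := by
      simp [hτ, algebraMap_eq]
    rwa [this] at hdvd
  have hτf : τ f = 0 := by
    by_contra hf0
    obtain ⟨d, hd⟩ := (support_nonempty.mpr hf0)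
    have hdi : ∀ i : Fin (m + 1), d i ≠ 0 := by
      intro i hdi0
      obtain ⟨q, hq⟩ := hXdvd i
      have hc : coeff d (τ f) = 0 := by
        classical
        rw [hq, mul_comm, coeff_mul_X']
        have : i ∉ d.support := by simp [Finsupp.mem_support_iff, hdi0]
        rw [if_neg this]
      exact (mem_support_iff.mp hd) hc
    have hsum : m + 1 ≤ d.sum fun _ e => e := by
      have h1 : (m + 1 : ℕ) = ∑ _i : Fin (m + 1), 1 := by simp
      have h2 : ∑ _i : Fin (m + 1), 1 ≤ ∑ i : Fin (m + 1), d i :=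
        Finset.sum_le_sum fun i _ => Nat.one_le_iff_ne_zero.mpr (hdi i)
      have h3 : (d.sum fun _ e => e) = ∑ i : Fin (m + 1), d i :=
        Finsupp.sum_fintype _ _ fun _ => rfl
      omega
    have h4 := le_totalDegree hd
    have h5 : (τ f).totalDegree ≤ f.totalDegree := td_shift_le a f
    omega
  -- `τ` is injective (it has an inverse, the shift by `-a`), hence `f = 0`.
  have hinv : (aeval (fun i : Fin (m + 1) => X i - C a) :
      MvPolynomial (Fin (m + 1)) ℂ →ₐ[ℂ] MvPolynomial (Fin (m + 1)) ℂ).comp τ =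
      AlgHom.id ℂ _ := by
    apply MvPolynomial.algHom_ext
    intro i
    simp [hτ, algebraMap_eq]
  calc f = AlgHom.id ℂ _ f := rfl
    _ = aeval (fun i : Fin (m + 1) => X i - C a) (τ f) := by rw [← hinv]; rfl
    _ = 0 := by rw [hτf, map_zero]
end

section
/- Let n ≥ 1, let a ∈ ℂ, and let f be a symmetric polynomial in the n variables x₁,…,xₙ over ℂ such that substituting a for the last variable yields the zero polynomial, i.e. f(x₁,…,x_{n−1},a) = 0. Then there exists a polynomial Q in x₁,…,xₙ over ℂ such that f = Q · ∏_{j=1}^{n} (xⱼ − a). -/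
open MvPolynomial

/-- Substituting `C a` for variable `j`: the difference is divisible by `X j - C a`. -/
lemma key_dvd {n : ℕ} (a : ℂ) (j : Fin n) (p : MvPolynomial (Fin n) ℂ) :
    (X j - C a) ∣ (p - aeval (fun i => if i = j then C a else X i) p) := by
  induction p using MvPolynomial.induction_on with
  | C c => simp
  | add p q hp hq =>
      have : p + q - aeval (fun i => if i = j then C a else X i) (p + q) =
          (p - aeval (fun i => if i = j then C a else X i) p) +
          (q - aeval (fun i => if i = j then C a else X i) q) := by
        rw [map_add]; ring
      rw [this]; exact dvd_add hp hq
  | mul_X p i hp =>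
      rw [map_mul, aeval_X]
      by_cases hij : i = j
      · subst hij
        simp only [if_pos rfl, eq_self_iff_true, if_true]
        have : p * X i - aeval (fun k => if k = i then C a else X k) p * C a =
            (p - aeval (fun k => if k = i then C a else X k) p) * X i +
            aeval (fun k => if k = i then C a else X k) p * (X i - C a) := by ring
        rw [this]
        exact dvd_add (hp.mul_right _) (dvd_mul_left _ _)
      · simp only [if_neg hij]
        have : p * X i - aeval (fun k => if k = j then C a else X k) p * X i =
            (p - aeval (fun k => if k = j then C a else X k) p) * X i := by ring
        rw [this]
        exact hp.mul_right _

lemma dvd_iff_subst_zero {n : ℕ} (a : ℂ) (j : Fin n) (p : MvPolynomial (Fin n) ℂ) :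
    (X j - C a) ∣ p ↔ aeval (fun i => if i = j then C a else X i) p = 0 := by
  constructor
  · rintro ⟨r, rfl⟩
    rw [map_mul, map_sub, aeval_X, aeval_C, if_pos rfl]
    simp
  · intro h0
    have := key_dvd a j p
    rwa [h0, sub_zero] at this

lemma prime_X_sub_C' {n : ℕ} (a : ℂ) (j : Fin n) :
    Prime (X j - C a : MvPolynomial (Fin n) ℂ) := by
  refine ⟨?_, ?_, ?_⟩
  · intro h0
    have := congrArg (eval (fun _ => a + 1)) h0
    simp at this
  · intro hu
    have := hu.map (eval (fun _ : Fin n => a))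
    simp at this
  · intro p q hpq
    rw [dvd_iff_subst_zero] at hpq
    rw [map_mul] at hpq
    rcases mul_eq_zero.mp hpq with h | h
    · exact Or.inl ((dvd_iff_subst_zero a j p).mpr h)
    · exact Or.inr ((dvd_iff_subst_zero a j q).mpr h)

lemma not_dvd_X_sub_C {n : ℕ} (a : ℂ) {i j : Fin n} (hij : i ≠ j) :
    ¬ ((X i - C a : MvPolynomial (Fin n) ℂ) ∣ (X j - C a)) := by
  rintro ⟨r, hr⟩
  have := congrArg (eval (fun k => if k = i then a else a + 1)) hr
  simp [hij, Ne.symm hij] at this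

lemma prod_dvd_of_primes {R ι : Type*} [CommRing R] [IsDomain R] (s : Finset ι)
    (p : ι → R) (f : R) (hp : ∀ i ∈ s, Prime (p i)) (hd : ∀ i ∈ s, p i ∣ f)
    (hne : ∀ i ∈ s, ∀ j ∈ s, i ≠ j → ¬ (p i ∣ p j)) : (∏ i ∈ s, p i) ∣ f := by
  classical
  induction s using Finset.induction_on with
  | empty => simp
  | @insert i s his ih =>
      rw [Finset.prod_insert his]
      obtain ⟨g, rfl⟩ := ih (fun k hk => hp k (Finset.mem_insert_of_mem hk))
        (fun k hk => hd k (Finset.mem_insert_of_mem hk))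
        (fun k hk l hl => hne k (Finset.mem_insert_of_mem hk) l (Finset.mem_insert_of_mem hl))
      have hpi := hp i (Finset.mem_insert_self i s)
      have hdi := hd i (Finset.mem_insert_self i s)
      rcases (hpi.dvd_mul.mp hdi) with h | h
      · obtain ⟨k, hk, hdvd⟩ := hpi.exists_mem_finset_dvd h
        exact absurd hdvd (hne i (Finset.mem_insert_self i s) k
          (Finset.mem_insert_of_mem hk) (fun he => his (he ▸ hk)))
      · obtain ⟨g', rfl⟩ := h
        exact ⟨g', by ring⟩

/-- A symmetric polynomial in `n ≥ 1` variables over `ℂ` which vanishes upon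
substituting `a ∈ ℂ` for the last variable is divisible by `∏ j (x j - a)`. -/
theorem symm_poly_product_factor
    (n : ℕ) (hn : 1 ≤ n) (a : ℂ)
    (f : MvPolynomial (Fin n) ℂ)
    (hf_sym : ∀ σ : Equiv.Perm (Fin n), rename σ f = f)
    (h : aeval (fun i : Fin n => if h : (i : ℕ) < n - 1
          then (X ⟨(i : ℕ), h⟩ : MvPolynomial (Fin (n - 1)) ℂ) else C a) f = 0) :
    ∃ Q : MvPolynomial (Fin n) ℂ, f = Q * ∏ j : Fin n, (X j - C a) := by
  obtain ⟨m, rfl⟩ : ∃ m, n = m + 1 := ⟨n - 1, (Nat.succ_pred_eq_of_pos hn).symm⟩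
  -- Step 1: substituting a for the last variable (within the same ring) gives 0
  have hlast : aeval (fun i : Fin (m + 1) => if i = Fin.last m then C a else X i) f = 0 := by
    have hcomp : ((rename (Fin.castSucc : Fin m → Fin (m + 1))).comp
        (aeval (fun i : Fin (m+1) => if h : (i : ℕ) < m + 1 - 1
          then (X ⟨(i : ℕ), h⟩ : MvPolynomial (Fin (m + 1 - 1)) ℂ) else C a))) f = 0 := by
      show (rename (Fin.castSucc : Fin m → Fin (m + 1)))
        ((aeval (fun i : Fin (m+1) => if h : (i : ℕ) < m + 1 - 1
          then (X ⟨(i : ℕ), h⟩ : MvPolynomial (Fin (m + 1 - 1)) ℂ) else C a)) f) = 0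
      rw [h, map_zero]
    rw [comp_aeval] at hcomp
    have hfun : (fun i : Fin (m+1) => rename (Fin.castSucc : Fin m → Fin (m + 1))
          (if h : (i : ℕ) < m + 1 - 1
          then (X ⟨(i : ℕ), h⟩ : MvPolynomial (Fin (m + 1 - 1)) ℂ) else C a)) =
        (fun i : Fin (m + 1) => if i = Fin.last m then C a else X i) := by
      funext i
      by_cases hi : (i : ℕ) < m
      · have hi' : (i : ℕ) < m + 1 - 1 := hi
        have hne : i ≠ Fin.last m := by
          intro he
          rw [he, Fin.val_last] at hi
          exact absurd hi (lt_irrefl m)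
        have hc : (Fin.castSucc (⟨(i : ℕ), hi⟩ : Fin m) : Fin (m + 1)) = i := Fin.ext rfl
        simp only [dif_pos hi', rename_X, if_neg hne]
        exact congrArg X (Fin.ext rfl)
      · have hi' : ¬ (i : ℕ) < m + 1 - 1 := hi
        have heq : i = Fin.last m := by
          apply Fin.ext
          rw [Fin.val_last]
          have := i.isLt
          omega
        simp only [dif_neg hi', if_pos heq, rename_C]
    rwa [hfun] at hcomp
  -- Step 2: each X j - C a divides f
  have hdvd : ∀ j : Fin (m + 1), (X j - C a : MvPolynomial (Fin (m+1)) ℂ) ∣ f := by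
    intro j
    rw [dvd_iff_subst_zero]
    set σ : Equiv.Perm (Fin (m + 1)) := Equiv.swap j (Fin.last m) with hσ
    have hfun : ((fun i : Fin (m+1) => if i = j then C a else X i) ∘ ⇑σ) =
        (fun i : Fin (m+1) => rename (⇑σ)
          (if i = Fin.last m then C a else X i)) := by
      funext i
      by_cases hi : i = Fin.last m
      · subst hi
        simp [hσ, Equiv.swap_apply_right, Function.comp]
      · have hσi : σ i ≠ j := by
          intro he
          apply hi
          have := congrArg σ.symm he
          simpa [hσ] using this
        simp [Function.comp, hσi, hi]
    have hstep : aeval (fun i : Fin (m+1) => if i = j then C a else X i) f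
        = rename (⇑σ) (aeval (fun i : Fin (m+1) =>
            if i = Fin.last m then C a else X i) f) := by
      conv_lhs => rw [← hf_sym σ]
      rw [aeval_rename, hfun]
      exact (DFunLike.congr_fun (comp_aeval _ (rename ⇑σ)) f).symm
    rw [hstep, hlast, map_zero]
  -- Step 3: product divides
  have hprod : (∏ j : Fin (m + 1), (X j - C a : MvPolynomial (Fin (m+1)) ℂ)) ∣ f :=
    prod_dvd_of_primes Finset.univ _ f (fun i _ => prime_X_sub_C' a i)
      (fun i _ => hdvd i) (fun i _ j _ hij => not_dvd_X_sub_C a hij)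
  obtain ⟨Q, hQ⟩ := hprod
  exact ⟨Q, by rw [hQ]; ring⟩
end

section
/- Let n ≥ 1, let a ∈ ℂ, and let f be a symmetric polynomial in the n variables x₁,…,xₙ over ℂ of total degree at most n such that substituting a for the last variable yields the zero polynomial, i.e. f(x₁,…,x_{n−1},a) = 0. Then there exists a constant c ∈ ℂ such that f = c · ∏_{j=1}^{n} (xⱼ − a). -/
/-!
Substituting `a` for `xₙ` kills `f`, so by symmetry substituting `a` for any `xⱼ` does. Modulo
`xⱼ - a` that substitution is the identity, hence every `xⱼ - a` divides `f`; peeling off one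
factor at a time (the remaining factors do not involve the next variable) the whole product
`∏ⱼ (xⱼ - a)` divides `f`. The product has total degree `n ≥ totalDegree f`, so the cofactor is
a constant.
-/

open MvPolynomial

namespace MvPolynomial

open Function

variable {R σ : Type*}

section CommRing

variable [CommRing R] [DecidableEq σ]

theorem X_sub_C_dvd_sub_aeval_update (p : MvPolynomial σ R) (j : σ) (a : R) :
    X j - C a ∣ p - aeval (update X j (C a)) p := by
  let I := Ideal.span {(X j - C a : MvPolynomial σ R)}
  suffices (Ideal.Quotient.mkₐ R I).comp (aeval (update X j (C a))) = Ideal.Quotient.mkₐ R I by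
    rw [← Ideal.mem_span_singleton, ← Ideal.Quotient.eq]
    exact (congrArg (· p) this).symm
  refine algHom_ext fun i => ?_
  obtain rfl | hij := eq_or_ne i j
  · simp only [AlgHom.comp_apply, aeval_X, update_self, Ideal.Quotient.mkₐ_eq_mk,
      Ideal.Quotient.eq]
    exact Ideal.mem_span_singleton.mpr ⟨-1, by ring⟩
  · simp [hij]

theorem X_sub_C_dvd_of_aeval_update_eq_zero {p : MvPolynomial σ R} {j : σ} {a : R}
    (h : aeval (update X j (C a)) p = 0) : X j - C a ∣ p := by
  simpa only [h, sub_zero] using X_sub_C_dvd_sub_aeval_update p j a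

end CommRing

theorem totalDegree_X_sub_C [CommRing R] [Nontrivial R] (j : σ) (a : R) :
    (X j - C a : MvPolynomial σ R).totalDegree = 1 := by
  cases exists_wellFoundedGT σ
  simp [← degree_degLexDegree, MonomialOrder.degree_X_sub_C]

section IsDomain

variable [CommRing R] [IsDomain R]

theorem X_sub_C_ne_zero (j : σ) (a : R) : (X j - C a : MvPolynomial σ R) ≠ 0 :=
  fun h => by simpa [h] using totalDegree_X_sub_C j a

theorem totalDegree_prod_X_sub_C (s : Finset σ) (a : R) :
    (∏ j ∈ s, (X j - C a) : MvPolynomial σ R).totalDegree = s.card := by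
  classical
  induction s using Finset.induction_on with
  | empty => simp
  | insert k s hk ih =>
    rw [Finset.prod_insert hk, totalDegree_mul_of_isDomain (X_sub_C_ne_zero k a)
      (Finset.prod_ne_zero_iff.mpr fun j _ => X_sub_C_ne_zero j a), totalDegree_X_sub_C, ih,
      Finset.card_insert_of_notMem hk, add_comm]

variable [DecidableEq σ]

theorem prod_X_sub_C_dvd_of_aeval_update_eq_zero {p : MvPolynomial σ R} {s : Finset σ} {a : R}
    (h : ∀ j ∈ s, aeval (update X j (C a)) p = 0) : ∏ j ∈ s, (X j - C a) ∣ p := by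
  induction s using Finset.induction_on with
  | empty => simp
  | insert k s hk ih =>
    obtain ⟨q, rfl⟩ := ih fun j hj => h j (Finset.mem_insert_of_mem hj)
    have hfix : aeval (update X k (C a)) (∏ j ∈ s, (X j - C a)) = ∏ j ∈ s, (X j - C a) := by
      rw [map_prod]
      refine Finset.prod_congr rfl fun j hj => ?_
      rw [map_sub, aeval_X, aeval_C, update_of_ne (ne_of_mem_of_not_mem hj hk)]
      rfl
    have hq : aeval (update X k (C a)) q = 0 := by
      have := h k (Finset.mem_insert_self k s)
      rwa [map_mul, hfix, mul_eq_zero, or_iff_right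
        (Finset.prod_ne_zero_iff.mpr fun j _ => X_sub_C_ne_zero j a)] at this
    rw [Finset.prod_insert hk, mul_comm]
    exact mul_dvd_mul_left _ (X_sub_C_dvd_of_aeval_update_eq_zero hq)

end IsDomain

theorem rename_aeval_update [CommSemiring R] {τ : Type*} [DecidableEq σ] [DecidableEq τ]
    {e : σ → τ} (he : Injective e) (p : MvPolynomial σ R) (j : σ) (a : R) :
    rename e (aeval (update X j (C a)) p) = aeval (update X (e j) (C a)) (rename e p) := by
  rw [aeval_rename, ← AlgHom.comp_apply, comp_aeval]
  refine congrArg (aeval · p) ?_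
  funext i
  obtain rfl | hij := eq_or_ne i j
  · simp
  · simp [hij, he.ne hij]

theorem rename_castLE_aeval_eq_aeval_update [CommSemiring R] {n : ℕ} (hn : 1 ≤ n)
    (p : MvPolynomial (Fin n) R) (a : R) :
    rename (Fin.castLE (Nat.sub_le n 1)) (aeval (fun i : Fin n => if h : (i : ℕ) < n - 1
      then (X ⟨i, h⟩ : MvPolynomial (Fin (n - 1)) R) else C a) p) =
      aeval (update X ⟨n - 1, by omega⟩ (C a)) p := by
  rw [← AlgHom.comp_apply, comp_aeval]
  refine congrArg (aeval · p) ?_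
  funext i
  by_cases hi : (i : ℕ) < n - 1
  · rw [dif_pos hi, rename_X, update_of_ne (Fin.ne_of_val_ne hi.ne)]
    rfl
  · have hlast : i = ⟨n - 1, by omega⟩ := Fin.ext (by simp only; omega)
    rw [dif_neg hi, hlast, update_self, rename_C]

end MvPolynomial

/-- A symmetric polynomial in `n ≥ 1` variables over `ℂ` of total degree at most `n`
which vanishes upon substituting `a ∈ ℂ` for the last variable is a constant
multiple of `∏ j (x j - a)`. -/
theorem symm_poly_const_multiple_of_product
    (n : ℕ) (hn : 1 ≤ n) (a : ℂ)
    (f : MvPolynomial (Fin n) ℂ)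
    (hf_sym : ∀ σ : Equiv.Perm (Fin n), rename σ f = f)
    (hf_deg : f.totalDegree ≤ n)
    (h : aeval (fun i : Fin n => if h : (i : ℕ) < n - 1
          then (X ⟨(i : ℕ), h⟩ : MvPolynomial (Fin (n - 1)) ℂ) else C a) f = 0) :
    ∃ c : ℂ, f = C c * ∏ j : Fin n, (X j - C a) := by
  set last : Fin n := ⟨n - 1, by omega⟩
  have hlast : aeval (Function.update X last (C a)) f = 0 := by
    rw [← rename_castLE_aeval_eq_aeval_update hn, h, map_zero]
  have hvanish (j : Fin n) : aeval (Function.update X j (C a)) f = 0 := by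
    have := rename_aeval_update (Equiv.swap last j).injective f last a
    rwa [hlast, map_zero, hf_sym, Equiv.swap_apply_left, eq_comm] at this
  obtain ⟨g, rfl⟩ := prod_X_sub_C_dvd_of_aeval_update_eq_zero fun j (_ : j ∈ Finset.univ) =>
    hvanish j
  obtain rfl | hg := eq_or_ne g 0
  · exact ⟨0, by simp⟩
  rw [totalDegree_mul_of_isDomain (Finset.prod_ne_zero_iff.mpr fun j _ => X_sub_C_ne_zero j a) hg,
    totalDegree_prod_X_sub_C, Finset.card_univ, Fintype.card_fin] at hf_deg
  refine ⟨g.coeff 0, ?_⟩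
  rw [← totalDegree_eq_zero_iff_eq_C.mp (by omega), mul_comm]
end
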